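/- arXiv:math/0505550 — 8 statements merged into one kernel-verified Lean document; each statement's English description precedes it below -/
import Mathlib

section
/- Let H be a subgroup of a group G. If H is 2-subnormal in G, i.e., there is a subgroup N with H normal in N and N normal in G, then H is protonormal in G: for every x ∈ G, the subgroups x⁻¹Hx and H commute, that is, (x⁻¹Hx)H = H(x⁻¹Hx). -/
open scoped Pointwise

namespace Subgroup

variable {G : Type*} [Group G]

theorem le_normalizer_of_conj_mem {H N : Subgroup G}
    (hconj : ∀ n ∈ N, ∀ h ∈ H, n * h * n⁻¹ ∈ H) : N ≤ normalizer (H : Set G) := by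
  intro n hn
  refine mem_normalizer_iff.mpr fun h => ⟨hconj n hn h, fun hconj_h => ?_⟩
  simpa [mul_assoc] using hconj n⁻¹ (inv_mem hn) _ hconj_h

end Subgroup

/-- If `H` is 2-subnormal in `G` (there is a subgroup `N` with `H ◁ N ◁ G`), then `H`
is protonormal in `G`: for every `x ∈ G` the subgroups `x⁻¹Hx` and `H` commute as sets,
i.e. `(x⁻¹Hx)H = H(x⁻¹Hx)`. -/
theorem stmt4 {G : Type*} [Group G] (H : Subgroup G)
    (hsub : ∃ N : Subgroup G, H ≤ N ∧ (∀ n ∈ N, ∀ h ∈ H, n * h * n⁻¹ ∈ H) ∧ N.Normal) :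
    ∀ x : G,
      ((fun g => x⁻¹ * g * x) '' (H : Set G)) * (H : Set G)
        = (H : Set G) * ((fun g => x⁻¹ * g * x) '' (H : Set G)) := by
  obtain ⟨N, hHN, hconj, hN⟩ := hsub
  intro x
  -- Every conjugate of `H` lies in `N`, which normalizes `H`.
  refine Subgroup.set_mul_normalizer_comm _ H ?_
  rintro _ ⟨h, hh, rfl⟩
  apply Subgroup.le_normalizer_of_conj_mem hconj
  simpa using hN.conj_mem h (hHN hh) x⁻¹
end

section
/- Let H be a protonormal subgroup of a group G and let x₁, …, xₙ ∈ G. Then the product of conjugates (x₁⁻¹Hx₁)(x₂⁻¹Hx₂)⋯(xₙ⁻¹Hxₙ) is itself a protonormal subgroup of G. -/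
/-!
Conjugating the identity `(x⁻¹Hx)H = H(x⁻¹Hx)` by arbitrary elements shows that any two
conjugates of a protonormal subgroup `H` commute as sets. Products of pairwise commuting subgroups
are subgroups (their joins), so the product `K` of the conjugates `xᵢ⁻¹Hxᵢ` is a subgroup; and a
conjugate `y⁻¹Ky` is again a product of conjugates of `H`, hence commutes with `K`.
-/

open scoped Pointwise

theorem Commute.image {α β F : Type*} [Mul α] [Mul β] [FunLike F α β] [MulHomClass F α β]
    (f : F) {s t : Set α} (h : Commute s t) : Commute (f '' s) (f '' t) := by
  simp only [Commute, SemiconjBy, ← Set.image_mul, h.eq]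

theorem image_inv_mul_mul_eq_image_conj {G : Type*} [Group G] (x : G) (s : Set G) :
    (fun g => x⁻¹ * g * x) '' s = MulAut.conj x⁻¹ '' s := by
  congr 1
  ext g
  rw [MulAut.conj_apply, inv_inv]

namespace Subgroup

variable {G : Type*} [Group G]

theorem coe_sup_of_commute {H K : Subgroup G} (h : Commute (H : Set G) K) :
    ((H ⊔ K : Subgroup G) : Set G) = H * K := by
  refine subset_antisymm ?_ (mul_subset (SetLike.coe_subset_coe.mpr le_sup_left)
    (SetLike.coe_subset_coe.mpr le_sup_right))
  have mul_self : (H * K : Set G) * (H * K) = H * K := by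
    rw [mul_assoc, ← mul_assoc (K : Set G), ← h.eq, mul_assoc, coe_mul_coe, ← mul_assoc,
      coe_mul_coe]
  have inv_self : (H * K : Set G)⁻¹ = H * K := by
    rw [mul_inv_rev, inv_coe_set, inv_coe_set, h.eq]
  rw [sup_eq_closure_mul]
  intro x hx
  induction hx using closure_induction with
  | mem x hx => exact hx
  | one => exact ⟨1, one_mem H, 1, one_mem K, mul_one 1⟩
  | mul x y _ _ hx hy => exact mul_self ▸ Set.mul_mem_mul hx hy
  | inv x _ hx => exact inv_self ▸ Set.inv_mem_inv.mpr hx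

theorem coe_foldr_sup_of_pairwise_commute {l : List (Subgroup G)}
    (hl : l.Pairwise fun H K : Subgroup G => Commute (H : Set G) (K : Set G)) :
    ((l.foldr (· ⊔ ·) ⊥ : Subgroup G) : Set G) = (l.map (↑)).prod := by
  induction l with
  | nil => simp [Set.singleton_one]
  | cons H l ih =>
    obtain ⟨hH, hl⟩ := List.pairwise_cons.mp hl
    have hcomm : Commute (H : Set G) (l.foldr (· ⊔ ·) ⊥ : Subgroup G) := by
      rw [ih hl]
      exact Commute.list_prod_right _ _ (by simpa using hH)
    rw [List.foldr_cons, coe_sup_of_commute hcomm, ih hl, List.map_cons, List.prod_cons]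

def IsProtonormal (H : Subgroup G) : Prop :=
  ∀ x : G, Commute ((fun g => x⁻¹ * g * x) '' (H : Set G)) H

theorem image_conj_list_prod (H : Subgroup G) (y : G) (l : List G) :
    MulAut.conj y '' (l.map fun a => MulAut.conj a '' (H : Set G)).prod
      = ((l.map (y * ·)).map fun a => MulAut.conj a '' (H : Set G)).prod := by
  rw [Set.image_list_prod, List.map_map, List.map_map]
  congr 1
  refine List.map_congr_left fun a _ => ?_
  simp only [Function.comp_apply, Set.image_image, map_mul]
  rfl

namespace IsProtonormal

variable {H : Subgroup G}

theorem commute_conj (hH : H.IsProtonormal) (a b : G) :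
    Commute (MulAut.conj a '' (H : Set G)) (MulAut.conj b '' (H : Set G)) := by
  have h := (hH (b⁻¹ * a)).image (MulAut.conj a)
  rw [Set.image_image] at h
  convert h.symm using 1
  refine Set.image_congr fun g _ => ?_
  simp only [MulAut.conj_apply]
  group

theorem commute_list_prod (hH : H.IsProtonormal) (l m : List G) :
    Commute (l.map fun a => MulAut.conj a '' (H : Set G)).prod
      (m.map fun b => MulAut.conj b '' (H : Set G)).prod :=
  Commute.list_prod_left _ _ fun s hs => Commute.list_prod_right _ _ fun t ht => by
    obtain ⟨a, -, rfl⟩ := List.mem_map.mp hs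
    obtain ⟨b, -, rfl⟩ := List.mem_map.mp ht
    exact hH.commute_conj a b

theorem exists_subgroup_eq_list_prod (hH : H.IsProtonormal) (l : List G) :
    ∃ K : Subgroup G, (K : Set G) = (l.map fun a => MulAut.conj a '' (H : Set G)).prod ∧
      K.IsProtonormal := by
  set L := l.map fun a => H.map (MulAut.conj a).toMonoidHom
  have hL : L.map (↑) = l.map fun a => MulAut.conj a '' (H : Set G) := by
    simp [L, Function.comp_def]
  have hpairwise : L.Pairwise fun A B : Subgroup G => Commute (A : Set G) (B : Set G) :=
    List.pairwise_of_forall_mem_list fun _ hA _ hB => by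
      obtain ⟨a, -, rfl⟩ := List.mem_map.mp hA
      obtain ⟨b, -, rfl⟩ := List.mem_map.mp hB
      simpa only [coe_map, MulEquiv.coe_toMonoidHom] using hH.commute_conj a b
  have hK := coe_foldr_sup_of_pairwise_commute hpairwise
  rw [hL] at hK
  refine ⟨_, hK, fun y => ?_⟩
  rw [image_inv_mul_mul_eq_image_conj, hK, image_conj_list_prod]
  exact hH.commute_list_prod _ _

end IsProtonormal

end Subgroup

/-- If `H` is a protonormal subgroup of `G` and `x₁, …, xₙ ∈ G`, then the set product
`(x₁⁻¹Hx₁)(x₂⁻¹Hx₂)⋯(xₙ⁻¹Hxₙ)` is a subgroup of `G` which is itself protonormal. -/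
theorem stmt6 {G : Type*} [Group G] (H : Subgroup G)
    (hproto : ∀ x : G,
      ((fun g => x⁻¹ * g * x) '' (H : Set G)) * (H : Set G)
        = (H : Set G) * ((fun g => x⁻¹ * g * x) '' (H : Set G)))
    (n : ℕ) (x : Fin n → G) :
    ∃ K : Subgroup G,
      (K : Set G) = (List.ofFn fun i : Fin n => (fun g => (x i)⁻¹ * g * (x i)) '' (H : Set G)).prod ∧
      ∀ y : G,
        ((fun g => y⁻¹ * g * y) '' (K : Set G)) * (K : Set G)
          = (K : Set G) * ((fun g => y⁻¹ * g * y) '' (K : Set G)) := by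
  have hH : H.IsProtonormal := hproto
  obtain ⟨K, hK, hKproto⟩ := hH.exists_subgroup_eq_list_prod (List.ofFn fun i => (x i)⁻¹)
  refine ⟨K, ?_, hKproto⟩
  simp only [hK, List.map_ofFn, Function.comp_def, image_inv_mul_mul_eq_image_conj]
end

section
/- Let H be a subgroup of a group G. The following are equivalent: (i) for every x ∈ G and h, k ∈ H, (xhx⁻¹)k(xhx⁻¹)⁻¹ ∈ H; (ii) for every x ∈ G and h ∈ H, H(xhx⁻¹) = (xhx⁻¹)H; (iii) H is normal in the intersection of all normal subgroups of G containing H; (iv) there exists a subgroup N of G with H normal in N and N normal in G. -/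
/-!
Every condition says that `H` is normalised by the normal closure `Hᴳ` of `H`, i.e. by the
subgroup generated by the conjugates `xhx⁻¹`. For (i) the point is that the conjugates of
elements of `H` form an inverse-closed set, so the one-sided inclusion `cHc⁻¹ ⊆ H` for all of
them already puts each of them in the normaliser; (ii) is the coset form of the same
membership; (iii) is it verbatim, since `Hᴳ` is the intersection of the normal subgroups
containing `H`; and in (iv) any such `N` contains `Hᴳ`, while `N = Hᴳ` is a witness.
-/

open scoped Pointwise

namespace Subgroup

variable {G : Type*} [Group G]

theorem normalClosure_le_iff_forall_conj_mem {s : Set G} {K : Subgroup G} :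
    normalClosure s ≤ K ↔ ∀ x : G, ∀ h ∈ s, x * h * x⁻¹ ∈ K := by
  rw [normalClosure, closure_le]
  constructor
  · exact fun hK x h hh =>
      hK (Group.mem_conjugatesOfSet_iff.mpr ⟨h, hh, isConj_iff.mpr ⟨x, rfl⟩⟩)
  · intro hK g hg
    obtain ⟨h, hh, hconj⟩ := Group.mem_conjugatesOfSet_iff.mp hg
    obtain ⟨x, rfl⟩ := isConj_iff.mp hconj
    exact hK x h hh

theorem mem_normalizer_iff_mul_singleton_eq {S : Set G} {g : G} :
    g ∈ normalizer S ↔ S * {g} = {g} * S := by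
  rw [← inv_mem_iff, mem_set_normalizer_iff', Set.mul_singleton, Set.singleton_mul,
    Set.image_mul_right, Set.image_mul_left, Set.ext_iff]
  rfl

theorem forall_conj_mem_normalizer_iff {H : Subgroup G} :
    (∀ x : G, ∀ h ∈ H, x * h * x⁻¹ ∈ normalizer (H : Set G)) ↔
      ∀ x : G, ∀ h ∈ H, ∀ k ∈ H, x * h * x⁻¹ * k * (x * h * x⁻¹)⁻¹ ∈ H := by
  refine ⟨fun hN x h hh k => (mem_normalizer_iff.mp (hN x h hh) k).mp, fun hH x h hh => ?_⟩
  refine mem_normalizer_iff.mpr fun k => ⟨hH x h hh k, fun hk => ?_⟩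
  -- `x h⁻¹ x⁻¹` is the inverse of `x h x⁻¹`, so it undoes the conjugation.
  simpa [mul_assoc] using hH x h⁻¹ (inv_mem hh) _ hk

theorem iInf_normal_of_le_eq_normalClosure (H : Subgroup G) :
    (⨅ N ∈ {N : Subgroup G | N.Normal ∧ H ≤ N}, N) = normalClosure (H : Set G) := by
  simp [normalClosure_eq_iInf, iInf_and]

theorem exists_normal_between_iff_normalClosure_le {s : Set G} {K : Subgroup G} :
    (∃ N : Subgroup G, s ⊆ N ∧ N ≤ K ∧ N.Normal) ↔ normalClosure s ≤ K := by
  refine ⟨fun ⟨N, hsN, hNK, hN⟩ => (normalClosure_le_normal hsN).trans hNK, fun hK => ?_⟩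
  exact ⟨normalClosure s, subset_normalClosure, hK, normalClosure_normal⟩

end Subgroup

open Subgroup in
/-- For a subgroup `H` of a group `G` the following are equivalent:
(i) for every `x ∈ G` and `h, k ∈ H`, `(xhx⁻¹)k(xhx⁻¹)⁻¹ ∈ H`;
(ii) for every `x ∈ G` and `h ∈ H`, `H(xhx⁻¹) = (xhx⁻¹)H`;
(iii) `H` is normal in the intersection of all normal subgroups of `G` containing `H`;
(iv) there exists a subgroup `N` of `G` with `H ◁ N ◁ G`. -/
theorem stmt7 {G : Type*} [Group G] (H : Subgroup G) :
    List.TFAE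
      [ ∀ x : G, ∀ h ∈ H, ∀ k ∈ H, (x * h * x⁻¹) * k * (x * h * x⁻¹)⁻¹ ∈ H,
        ∀ x : G, ∀ h ∈ H,
          (H : Set G) * {x * h * x⁻¹} = ({x * h * x⁻¹} : Set G) * (H : Set G),
        ∀ n ∈ (⨅ N ∈ {N : Subgroup G | N.Normal ∧ H ≤ N}, N), ∀ h ∈ H, n * h * n⁻¹ ∈ H,
        ∃ N : Subgroup G, H ≤ N ∧ (∀ n ∈ N, ∀ h ∈ H, n * h * n⁻¹ ∈ H) ∧ N.Normal ] := by
  refine List.tfae_of_forall (normalClosure (H : Set G) ≤ normalizer (H : Set G)) _ ?_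
  simp only [List.mem_cons, List.not_mem_nil, or_false]
  rintro _ (rfl | rfl | rfl | rfl)
  · exact (normalClosure_le_iff_forall_conj_mem.trans forall_conj_mem_normalizer_iff).symm
  · simp_rw [normalClosure_le_iff_forall_conj_mem, mem_normalizer_iff_mul_singleton_eq,
      SetLike.mem_coe]
  · rw [iInf_normal_of_le_eq_normalClosure, le_normalizer_iff]
  · simp_rw [← le_normalizer_iff, ← exists_normal_between_iff_normalClosure_le,
      SetLike.coe_subset_coe]
end

section
/- Let H be a subnormal subgroup of a group G and let x, y ∈ G. If S is a family of representatives for the right coset space (H ∩ H^x H^{y⁻¹})\H, then HxHyH is the disjoint union over h ∈ S of the double cosets HxhyH. Conversely, any subset S of H for which HxHyH is the disjoint union of the HxhyH, h ∈ S, is a family of representatives for (H ∩ H^x H^{y⁻¹})\H. -/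
/-!
For `g, s ∈ H` one has `x g y ∈ H (x s y) H` exactly when `g s⁻¹ ∈ H^x H^{y⁻¹}`: writing
`x g y = a (x s y) b` gives `g s⁻¹ = (x⁻¹ a x) · s (y b y⁻¹) s⁻¹`, and `s ∈ H ≤ N` normalizes
`H^{y⁻¹} = y H y⁻¹` because `N` is normal and normalizes `H`. Hence the double cosets `HxhyH`,
`h ∈ H`, which partition `HxHyH`, are indexed exactly by the cosets `(H ∩ H^x H^{y⁻¹}) h`.
-/

open scoped Pointwise

open DoubleCoset

theorem existsUnique_eq_iff_iUnion_eq_and_pairwiseDisjoint {α β : Type*} {f : α → Set β}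
    (hne : ∀ a, (f a).Nonempty) (hf : ∀ a b, ¬Disjoint (f a) (f b) → f a = f b)
    {S T : Set α} (hST : S ⊆ T) :
    (∀ g ∈ T, ∃! s, s ∈ S ∧ f g = f s) ↔
      (⋃ g ∈ T, f g) = (⋃ s ∈ S, f s) ∧ S.PairwiseDisjoint f := by
  constructor
  · intro hrep
    refine ⟨?_, fun s hs t ht hst => ?_⟩
    · refine subset_antisymm (Set.iUnion₂_subset fun g hg => ?_)
        (Set.biUnion_subset_biUnion_left hST)
      obtain ⟨s, ⟨hs, hgs⟩, -⟩ := hrep g hg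
      exact hgs ▸ Set.subset_biUnion_of_mem hs
    · by_contra hst'
      exact hst ((hrep t (hST ht)).unique ⟨hs, (hf s t hst').symm⟩ ⟨ht, rfl⟩)
  · rintro ⟨hcover, hdisj⟩ g hg
    obtain ⟨b, hb⟩ := hne g
    have hb' : b ∈ ⋃ s ∈ S, f s := hcover ▸ Set.mem_biUnion hg hb
    obtain ⟨s, hs, hbs⟩ := Set.mem_iUnion₂.mp hb'
    have hgs : f g = f s := hf g s (Set.not_disjoint_iff.mpr ⟨b, hb, hbs⟩)
    refine ⟨s, ⟨hs, hgs⟩, fun t ⟨ht, hgt⟩ => ?_⟩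
    by_contra hts
    obtain ⟨c, hc⟩ := hne t
    exact Set.disjoint_left.mp (hdisj ht hs hts) hc (by rwa [← hgs, hgt])

theorem doubleCoset_eq_iff_mem {G : Type*} [Group G] {H K : Subgroup G} {a b : G} :
    doubleCoset a H K = doubleCoset b H K ↔ a ∈ doubleCoset b H K :=
  ⟨fun h => h ▸ mem_doubleCoset_self H K a, doubleCoset_eq_of_mem⟩

theorem mul_singleton_mul_singleton_mul_eq_iUnion {G : Type*} [Monoid G] (s : Set G) (x y : G) :
    s * {x} * s * {y} * s = ⋃ h ∈ s, s * {x * h * y} * s := by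
  ext g
  simp only [Set.mem_mul, Set.mem_singleton_iff, Set.mem_iUnion, exists_prop, exists_eq_left,
    exists_exists_and_eq_and]
  constructor
  · rintro ⟨_, ⟨p, hp, h, hh, rfl⟩, q, hq, rfl⟩
    exact ⟨h, hh, p, hp, q, hq, by simp only [mul_assoc]⟩
  · rintro ⟨h, hh, p, hp, q, hq, rfl⟩
    exact ⟨_, ⟨p, hp, h, hh, rfl⟩, q, hq, by simp only [mul_assoc]⟩

section Subnormal

variable {G : Type*} [Group G] {H N : Subgroup G}

theorem exists_conj_mul_conj_eq_conj (hconj : ∀ n ∈ N, ∀ h ∈ H, n * h * n⁻¹ ∈ H) (hN : N.Normal)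
    (y : G) {n b : G} (hn : n ∈ N) (hb : b ∈ H) :
    ∃ b' ∈ H, n * (y * b * y⁻¹) * n⁻¹ = y * b' * y⁻¹ := by
  have hm : y⁻¹ * n * y ∈ N := by simpa using hN.conj_mem n hn y⁻¹
  exact ⟨_, hconj _ hm b hb, by group⟩

theorem mul_inv_mem_conj_mul_conj_iff (hHN : H ≤ N) (hconj : ∀ n ∈ N, ∀ h ∈ H, n * h * n⁻¹ ∈ H)
    (hN : N.Normal) (x y : G) {g s : G} (hs : s ∈ H) :
    g * s⁻¹ ∈ ((fun g => x⁻¹ * g * x) '' (H : Set G)) * ((fun g => y * g * y⁻¹) '' (H : Set G)) ↔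
      x * g * y ∈ doubleCoset (x * s * y) H H := by
  simp only [Set.mem_mul, Set.mem_image, mem_doubleCoset]
  constructor
  · rintro ⟨_, ⟨a, ha, rfl⟩, _, ⟨b, hb, rfl⟩, hg⟩
    obtain ⟨b', hb', hconj'⟩ :=
      exists_conj_mul_conj_eq_conj hconj hN y (inv_mem (hHN hs)) hb
    refine ⟨a, ha, b', hb', ?_⟩
    rw [mul_inv_eq_iff_eq_mul.mp hg.symm]
    calc x * ((x⁻¹ * a * x) * (y * b * y⁻¹) * s) * y
        = a * x * s * (s⁻¹ * (y * b * y⁻¹) * s⁻¹⁻¹) * y := by group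
      _ = a * (x * s * y) * b' := by rw [hconj']; group
  · rintro ⟨a, ha, b, hb, hg⟩
    obtain ⟨b', hb', hconj'⟩ := exists_conj_mul_conj_eq_conj hconj hN y (hHN hs) hb
    refine ⟨_, ⟨a, ha, rfl⟩, _, ⟨b', hb', rfl⟩, ?_⟩
    rw [← hconj', (by group : g = x⁻¹ * (x * g * y) * y⁻¹), hg]
    group

end Subnormal

/-- Let `H` be subnormal in `G` and `x, y ∈ G`.  A subset `S ⊆ H` is a family of
representatives for the right coset space `(H ∩ H^x H^{y⁻¹})\H` if and only if
`HxHyH` is the disjoint union over `h ∈ S` of the double cosets `HxhyH`. -/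
theorem stmt9 {G : Type*} [Group G] (H : Subgroup G)
    (hsub : ∃ N : Subgroup G, H ≤ N ∧ (∀ n ∈ N, ∀ h ∈ H, n * h * n⁻¹ ∈ H) ∧ N.Normal)
    (x y : G) (S : Set G) (hS : S ⊆ H) :
    (∀ g ∈ H, ∃! s, s ∈ S ∧ g * s⁻¹ ∈ H ∧
        g * s⁻¹ ∈ ((fun g => x⁻¹ * g * x) '' (H : Set G)) *
          ((fun g => y * g * y⁻¹) '' (H : Set G))) ↔
    ((H : Set G) * {x} * (H : Set G) * {y} * (H : Set G)
        = ⋃ h ∈ S, (H : Set G) * {x * h * y} * (H : Set G)) ∧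
      S.PairwiseDisjoint (fun h => (H : Set G) * {x * h * y} * (H : Set G)) := by
  obtain ⟨N, hHN, hconj, hN⟩ := hsub
  have hrep : ∀ g ∈ H, ∀ s ∈ S, (g * s⁻¹ ∈ H ∧
      g * s⁻¹ ∈ ((fun g => x⁻¹ * g * x) '' (H : Set G)) * ((fun g => y * g * y⁻¹) '' (H : Set G))
        ↔ doubleCoset (x * g * y) H H = doubleCoset (x * s * y) H H) := fun g hg s hs => by
    rw [doubleCoset_eq_iff_mem, ← mul_inv_mem_conj_mul_conj_iff hHN hconj hN x y (hS hs),
      and_iff_right (mul_mem hg (inv_mem (hS hs)))]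
  rw [mul_singleton_mul_singleton_mul_eq_iUnion]
  refine Iff.trans ?_ (existsUnique_eq_iff_iUnion_eq_and_pairwiseDisjoint
    (f := fun h => doubleCoset (x * h * y) H H) (fun a => ⟨_, mem_doubleCoset_self H H _⟩)
    (fun a b => eq_of_not_disjoint) hS)
  exact forall₂_congr fun g hg =>
    existsUnique_congr fun s => and_congr_right fun hs => hrep g hg s hs
end

section
/- Let (G,H) be a Hecke pair over a field F of characteristic zero, and for a ∈ H(G,H) let f_a : G → F be defined by f_a(t) = the coefficient of δ_{Ht} in a(δ_H). Then for every a in the Hecke algebra, f_a is constant on each double coset HgH, and its support is contained in a finite union of double cosets. -/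
open scoped Pointwise Classical


/-- The free `F`-vector space on the right coset space `H\G`. -/
abbrev HeckeModule {G : Type*} [Group G] (H : Subgroup G) (F : Type*) [Field F] :=
  Quotient (QuotientGroup.rightRel H) →₀ F

/-- The basis vector `δ_{Ht}` of `F(H\G)`. -/
noncomputable def deltaH {G : Type*} [Group G] (H : Subgroup G) (F : Type*) [Field F]
    (t : G) : HeckeModule H F :=
  Finsupp.single (Quotient.mk (QuotientGroup.rightRel H) t) 1

/-- `T` is the Hecke operator `σ_x`: there is a (finite) family of representatives `S`
for the right coset space `(H ∩ x⁻¹Hx)\H` such that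
`T(δ_{Ht}) = |S|⁻¹ • Σ_{h ∈ S} δ_{Hxht}` for all `t ∈ G`. -/
def IsSigma {G : Type*} [Group G] (H : Subgroup G) (F : Type*) [Field F] (x : G)
    (T : Module.End F (HeckeModule H F)) : Prop :=
  ∃ S : Finset G, (↑S : Set G) ⊆ (H : Set G) ∧
    (∀ g ∈ H, ∃! s, s ∈ S ∧ g * s⁻¹ ∈ H ∧ x * (g * s⁻¹) * x⁻¹ ∈ H) ∧
    ∀ t : G, T (deltaH H F t) = (S.card : F)⁻¹ • ∑ h ∈ S, deltaH H F (x * h * t)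

/-- `(G, H)` is a Hecke pair: `[H : H ∩ x⁻¹Hx] < ∞` for all `x ∈ G`. -/
def IsHeckePair {G : Type*} [Group G] (H : Subgroup G) : Prop :=
  ∀ x : G, (H ⊓ H.comap (MulAut.conj x).toMonoidHom).relIndex H ≠ 0


/-!
Each `σ_x` sends `δ_{Ht}` to an average of the `δ_{Hxht}`, i.e. it acts through left
multiplication, so it commutes with the right translations `δ_{Ht} ↦ δ_{Htk}`; hence so does
every element `a` of the Hecke algebra. Right translation by `k ∈ H` fixes `δ_H`, hence fixes
`a(δ_H)`, which makes `f_a` right `H`-invariant; left `H`-invariance holds because `f_a` is a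
function on `H\G`. The support of `f_a` consists of finitely many right cosets, and each of them
lies in a single double coset.
-/

namespace HeckeModule

variable {G : Type*} [Group G] (H : Subgroup G) (F : Type*) [Field F]

lemma rightRel_mul_right {a b : G} (k : G) (hab : QuotientGroup.rightRel H a b) :
    QuotientGroup.rightRel H (a * k) (b * k) := by
  rw [QuotientGroup.rightRel_apply] at hab ⊢
  simpa [mul_assoc] using hab

lemma mk_mul_left_of_mem {h : G} (hh : h ∈ H) (t : G) :
    Quotient.mk (QuotientGroup.rightRel H) (h * t) = Quotient.mk _ t :=
  Quotient.sound <| by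
    show QuotientGroup.rightRel H _ _
    rw [QuotientGroup.rightRel_apply]
    simpa using H.inv_mem hh

def rightCosetEquiv (k : G) :
    Quotient (QuotientGroup.rightRel H) ≃ Quotient (QuotientGroup.rightRel H) where
  toFun := Quotient.map' (· * k) fun _ _ => rightRel_mul_right H k
  invFun := Quotient.map' (· * k⁻¹) fun _ _ => rightRel_mul_right H k⁻¹
  left_inv c := Quotient.inductionOn' c fun t => by simp
  right_inv c := Quotient.inductionOn' c fun t => by simp

/-- Right translation `δ_{Ht} ↦ δ_{Htk}` on `F(H\G)`. -/
noncomputable def rightTranslate (k : G) : Module.End F (HeckeModule H F) :=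
  (Finsupp.domLCongr (rightCosetEquiv H k)).toLinearMap

variable {H F}

lemma rightTranslate_deltaH (k t : G) :
    rightTranslate H F k (deltaH H F t) = deltaH H F (t * k) := by
  simp [rightTranslate, deltaH, rightCosetEquiv]

lemma rightTranslate_apply_mk (k t : G) (v : HeckeModule H F) :
    rightTranslate H F k v (Quotient.mk _ t) = v (Quotient.mk _ (t * k⁻¹)) := by
  simp [rightTranslate, rightCosetEquiv]

lemma rightTranslate_deltaH_one_of_mem {k : G} (hk : k ∈ H) :
    rightTranslate H F k (deltaH H F 1) = deltaH H F 1 := by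
  rw [rightTranslate_deltaH, deltaH, deltaH, ← mk_mul_left_of_mem H hk 1, one_mul, mul_one]

lemma ext_deltaH {T T' : Module.End F (HeckeModule H F)}
    (h : ∀ t, T (deltaH H F t) = T' (deltaH H F t)) : T = T' :=
  Finsupp.lhom_ext' fun c => LinearMap.ext_ring <| Quotient.inductionOn' c h

lemma _root_.IsSigma.commute_rightTranslate {x : G} {T : Module.End F (HeckeModule H F)}
    (hT : IsSigma H F x T) (k : G) : Commute T (rightTranslate H F k) := by
  obtain ⟨S, -, -, hT⟩ := hT
  refine ext_deltaH fun t => ?_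
  simp only [Module.End.mul_apply, rightTranslate_deltaH, hT, map_smul, map_sum, mul_assoc]

lemma commute_rightTranslate_of_mem_adjoin {a : Module.End F (HeckeModule H F)}
    (ha : a ∈ Algebra.adjoin F {T | ∃ x : G, IsSigma H F x T}) (k : G) :
    Commute a (rightTranslate H F k) := by
  have hle : Algebra.adjoin F {T | ∃ x : G, IsSigma H F x T} ≤
      Subalgebra.centralizer F {rightTranslate H F k} := by
    refine Algebra.adjoin_le fun T ⟨x, (hT : IsSigma H F x T)⟩ =>
      (Subalgebra.mem_centralizer_iff F).mpr ?_
    rintro _ rfl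
    exact (hT.commute_rightTranslate k).symm.eq
  exact ((Subalgebra.mem_centralizer_iff F).mp (hle ha) _ rfl).symm

lemma exists_finset_doubleCoset_cover (v : HeckeModule H F) :
    ∃ D : Finset G, ∀ t : G, v (Quotient.mk _ t) ≠ 0 →
      ∃ d ∈ D, t ∈ (H : Set G) * {d} * (H : Set G) := by
  refine ⟨v.support.image Quotient.out, fun t ht => ⟨_, Finset.mem_image_of_mem _
    (Finsupp.mem_support_iff.mpr ht), ?_⟩⟩
  have hmem : t * (Quotient.mk (QuotientGroup.rightRel H) t).out⁻¹ ∈ H := by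
    rw [← QuotientGroup.rightRel_apply]
    exact Quotient.exact (Quotient.out_eq _)
  exact ⟨_, Set.mul_mem_mul hmem rfl, 1, H.one_mem, by group⟩

end HeckeModule

open HeckeModule in
theorem stmt12_general {G : Type*} [Group G] (H : Subgroup G) (F : Type*) [Field F] :
    ∀ a ∈ Algebra.adjoin F {T : Module.End F (HeckeModule H F) | ∃ x : G, IsSigma H F x T},
      (∀ g : G, ∀ h ∈ H, ∀ k ∈ H,
          (a (deltaH H F 1)) (Quotient.mk (QuotientGroup.rightRel H) (h * g * k))
            = (a (deltaH H F 1)) (Quotient.mk (QuotientGroup.rightRel H) g)) ∧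
      (∃ D : Finset G, ∀ t : G,
          (a (deltaH H F 1)) (Quotient.mk (QuotientGroup.rightRel H) t) ≠ 0 →
            ∃ d ∈ D, t ∈ (H : Set G) * {d} * (H : Set G)) := by
  intro a ha
  refine ⟨fun g h hh k hk => ?_, exists_finset_doubleCoset_cover _⟩
  have hfix : rightTranslate H F k (a (deltaH H F 1)) = a (deltaH H F 1) := by
    rw [← Module.End.mul_apply, ← (commute_rightTranslate_of_mem_adjoin ha k).eq,
      Module.End.mul_apply, rightTranslate_deltaH_one_of_mem hk]
  calc (a (deltaH H F 1)) (Quotient.mk _ (h * g * k))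
      = rightTranslate H F k (a (deltaH H F 1)) (Quotient.mk _ (g * k)) := by
        rw [hfix, mul_assoc, mk_mul_left_of_mem H hh]
    _ = (a (deltaH H F 1)) (Quotient.mk _ g) := by
        rw [rightTranslate_apply_mk, mul_inv_cancel_right]

/-- For every `a` in the Hecke algebra (the subalgebra of `End(F(H\G))` generated by
the operators `σ_x`), the function `f_a(t) = coefficient of δ_{Ht} in a(δ_H)` is
constant on each double coset `HgH`, and its support is contained in a finite union
of double cosets. -/
theorem stmt12 {G : Type*} [Group G] (H : Subgroup G) (F : Type*) [Field F] [CharZero F]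
    (hH : IsHeckePair H) :
    ∀ a ∈ Algebra.adjoin F {T : Module.End F (HeckeModule H F) | ∃ x : G, IsSigma H F x T},
      (∀ g : G, ∀ h ∈ H, ∀ k ∈ H,
          (a (deltaH H F 1)) (Quotient.mk (QuotientGroup.rightRel H) (h * g * k))
            = (a (deltaH H F 1)) (Quotient.mk (QuotientGroup.rightRel H) g)) ∧
      (∃ D : Finset G, ∀ t : G,
          (a (deltaH H F 1)) (Quotient.mk (QuotientGroup.rightRel H) t) ≠ 0 →
            ∃ d ∈ D, t ∈ (H : Set G) * {d} * (H : Set G)) :=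
  stmt12_general H F
end

section
/- Let (G,H) be a Hecke pair and define the hermitian form on F(H\G) by ⟪δ_{Ht}, δ_{Hs}⟫ = Δ(s) if Ht = Hs and 0 otherwise, where Δ(s) = R(s)/R(s⁻¹). Then for every x ∈ G and all ξ, η ∈ F(H\G), ⟪σ_x(ξ), η⟫ = ⟪ξ, σ_{x⁻¹}(η)⟫. -/
/-!
Both sides are bilinear, so it suffices to compare them on basis vectors `δ_{Ht}`, `δ_{Hs}`.
Since `S_x` is a transversal of `(H ∩ x⁻¹Hx)\H`, at most one `h ∈ S_x` has `Hxht = Hs`, and one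
exists iff `s ∈ HxHt`. Hence `⟪σ_x δ_{Ht}, δ_{Hs}⟫ = Δ(s) / R(x)` if `s ∈ HxHt` and `0`
otherwise, and likewise `⟪δ_{Ht}, σ_{x⁻¹} δ_{Hs}⟫ = Δ(t) / R(x⁻¹)` if `t ∈ Hx⁻¹Hs`. The two
conditions agree, and then `Δ(s) = Δ(x) Δ(t) = R(x) / R(x⁻¹) · Δ(t)`, because `Δ` is a
homomorphism trivial on `H`. Multiplicativity of `Δ(g) = [H : H ∩ g⁻¹Hg] / [g⁻¹Hg : H ∩ g⁻¹Hg]`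
is the cocycle identity for index ratios of commensurable subgroups, obtained by passing to a
common subgroup of finite index.
-/

open scoped Pointwise Classical


lemma DoubleCoset.inv_mem_doubleCoset_inv {G : Type*} [Group G] {H K : Subgroup G} {a x : G} :
    a⁻¹ ∈ doubleCoset x⁻¹ K H ↔ a ∈ doubleCoset x H K := by
  simp only [mem_doubleCoset]
  constructor
  · rintro ⟨k, hk, h, hh, e⟩
    exact ⟨h⁻¹, inv_mem hh, k⁻¹, inv_mem hk, by rw [← inv_inv a, e]; group⟩
  · rintro ⟨h, hh, k, hk, rfl⟩
    exact ⟨k⁻¹, inv_mem hk, h⁻¹, inv_mem hh, by group⟩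

lemma QuotientGroup.mk_rightRel_eq_iff {G : Type*} [Group G] {H : Subgroup G} {a b : G} :
    Quotient.mk (rightRel H) a = Quotient.mk (rightRel H) b ↔ b * a⁻¹ ∈ H :=
  Quotient.eq.trans rightRel_apply

namespace Subgroup

variable {G : Type*} [Group G]

/-- `H.comapConj g = g⁻¹ H g`. -/
abbrev comapConj (H : Subgroup G) (g : G) : Subgroup G :=
  H.comap (MulAut.conj g).toMonoidHom

lemma mem_comapConj {H : Subgroup G} {g a : G} : a ∈ H.comapConj g ↔ g * a * g⁻¹ ∈ H := by
  simp [comapConj]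

lemma comapConj_comapConj (H : Subgroup G) (x y : G) :
    (H.comapConj x).comapConj y = H.comapConj (x * y) := by
  ext a
  simp [mul_assoc]

lemma comapConj_eq_self_of_mem {H : Subgroup G} {h : G} (hh : h ∈ H) : H.comapConj h = H := by
  ext a
  rw [mem_comapConj]
  exact ⟨fun ha => by simpa [mul_assoc] using mul_mem (mul_mem (inv_mem hh) ha) hh,
    fun ha => mul_mem (mul_mem hh ha) (inv_mem hh)⟩

lemma inf_comapConj (A B : Subgroup G) (g : G) :
    (A ⊓ B).comapConj g = A.comapConj g ⊓ B.comapConj g :=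
  comap_inf A B _

lemma relIndex_comapConj (A B : Subgroup G) (g : G) :
    (A.comapConj g).relIndex (B.comapConj g) = A.relIndex B := by
  rw [comapConj, relIndex_comap, comapConj,
    map_comap_eq_self_of_surjective (MulAut.conj g).surjective]

lemma commensurable_comapConj {A B : Subgroup G} (g : G) (h : Commensurable A B) :
    Commensurable (A.comapConj g) (B.comapConj g) := by
  simpa only [Commensurable, relIndex_comapConj] using h

variable (F : Type*) [Field F]

noncomputable def indexRatio (A B : Subgroup G) : F :=
  ((A ⊓ B).relIndex A : F) / ((A ⊓ B).relIndex B : F)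

variable {F}

lemma indexRatio_eq_div_of_le [CharZero F] {A B D : Subgroup G} (hD : D ≤ A ⊓ B)
    (hDA : D.relIndex A ≠ 0) :
    indexRatio F A B = (D.relIndex A : F) / (D.relIndex B : F) := by
  have hA := relIndex_mul_relIndex D (A ⊓ B) A hD inf_le_left
  have hB := relIndex_mul_relIndex D (A ⊓ B) B hD inf_le_right
  have hD' : (D.relIndex (A ⊓ B) : F) ≠ 0 :=
    Nat.cast_ne_zero.mpr fun h => hDA (by rw [← hA, h, zero_mul])
  rw [← hA, ← hB, indexRatio, Nat.cast_mul, Nat.cast_mul, mul_div_mul_left _ _ hD']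

lemma indexRatio_mul_indexRatio [CharZero F] {A B C : Subgroup G} (hAB : Commensurable A B)
    (hBC : Commensurable B C) :
    indexRatio F A B * indexRatio F B C = indexRatio F A C := by
  set D := A ⊓ B ⊓ C
  have hDA : D.relIndex A ≠ 0 :=
    relIndex_inf_ne_zero (by rw [inf_relIndex_left]; exact hAB.2) (hAB.trans hBC).2
  have hDB : D.relIndex B ≠ 0 :=
    relIndex_inf_ne_zero (by rw [inf_relIndex_right]; exact hAB.1) hBC.2
  rw [indexRatio_eq_div_of_le inf_le_left hDA,
    indexRatio_eq_div_of_le (le_inf (inf_le_left.trans inf_le_right) inf_le_right) hDB,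
    indexRatio_eq_div_of_le (le_inf (inf_le_left.trans inf_le_left) inf_le_right) hDA,
    div_mul_div_cancel₀ (Nat.cast_ne_zero.mpr hDB)]

lemma indexRatio_comapConj (A B : Subgroup G) (g : G) :
    indexRatio F (A.comapConj g) (B.comapConj g) = indexRatio F A B := by
  rw [indexRatio, indexRatio, ← inf_comapConj, relIndex_comapConj, relIndex_comapConj]

lemma indexRatio_self (A : Subgroup G) : indexRatio F A A = 1 := by
  simp [indexRatio]

end Subgroup

open Subgroup

section ModularFunction

variable {G : Type*} [Group G] (H : Subgroup G) (F : Type*) [Field F]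

/-- The modular function `Δ`; `modularFunction_eq` identifies it with `R(g) / R(g⁻¹)`. -/
noncomputable def modularFunction (g : G) : F :=
  indexRatio F H (H.comapConj g)

variable {H F}

lemma relIndex_inf_comapConj_inv (g : G) :
    (H ⊓ H.comapConj g).relIndex (H.comapConj g) = (H ⊓ H.comapConj g⁻¹).relIndex H := by
  rw [← relIndex_comapConj (H ⊓ H.comapConj g⁻¹) H g, inf_comapConj, comapConj_comapConj,
    inv_mul_cancel, comapConj_eq_self_of_mem H.one_mem, inf_comm]

lemma commensurable_comapConj_of_isHeckePair (hH : IsHeckePair H) (g : G) :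
    Commensurable H (H.comapConj g) := by
  refine ⟨?_, ?_⟩
  · rw [← inf_relIndex_right, relIndex_inf_comapConj_inv]
    exact hH g⁻¹
  · rw [← inf_relIndex_left]
    exact hH g

lemma modularFunction_eq (g : G) :
    modularFunction H F g =
      ((H ⊓ H.comapConj g).relIndex H : F) / ((H ⊓ H.comapConj g⁻¹).relIndex H : F) := by
  rw [modularFunction, indexRatio, relIndex_inf_comapConj_inv]

lemma modularFunction_of_mem {h : G} (hh : h ∈ H) : modularFunction H F h = 1 := by
  rw [modularFunction, comapConj_eq_self_of_mem hh, indexRatio_self]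

variable [CharZero F]

lemma modularFunction_mul (hH : IsHeckePair H) (x y : G) :
    modularFunction H F (x * y) = modularFunction H F x * modularFunction H F y := by
  have hconj : Commensurable (H.comapConj y) (H.comapConj (x * y)) := by
    rw [← comapConj_comapConj]
    exact commensurable_comapConj y (commensurable_comapConj_of_isHeckePair hH x)
  rw [modularFunction, ← indexRatio_mul_indexRatio
    (commensurable_comapConj_of_isHeckePair hH y) hconj, ← comapConj_comapConj,
    indexRatio_comapConj, mul_comm]
  rfl

end ModularFunction

section ModularFunctionHecke

variable {G : Type*} [Group G] {H : Subgroup G} {F : Type*} [Field F] [CharZero F]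
  (hH : IsHeckePair H)
include hH

lemma modularFunction_mul_of_mem_left {h : G} (hh : h ∈ H) (g : G) :
    modularFunction H F (h * g) = modularFunction H F g := by
  rw [modularFunction_mul hH, modularFunction_of_mem hh, one_mul]

lemma modularFunction_of_mem_doubleCoset {a x : G} (ha : a ∈ DoubleCoset.doubleCoset x H H) :
    modularFunction H F a = modularFunction H F x := by
  obtain ⟨h, hh, k, hk, rfl⟩ := DoubleCoset.mem_doubleCoset.mp ha
  rw [modularFunction_mul hH, modularFunction_mul_of_mem_left hH hh,
    modularFunction_of_mem hk, mul_one]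

end ModularFunctionHecke

section Transversal

variable {G : Type*} [Group G] {H : Subgroup G} {x : G} {S : Finset G}
  (hSH : (S : Set G) ⊆ H)
  (hS : ∀ g ∈ H, ∃! s, s ∈ S ∧ g * s⁻¹ ∈ H ∧ x * (g * s⁻¹) * x⁻¹ ∈ H)
include hSH hS

lemma card_eq_relIndex_of_transversal : S.card = (H ⊓ H.comapConj x).relIndex H := by
  have hT : IsComplement ((H ⊓ H.comapConj x).subgroupOf H : Set H) {h : H | (h : G) ∈ S} := by
    refine isComplement_iff_existsUnique_mul_inv_mem.mpr fun g => ?_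
    obtain ⟨s, ⟨hsS, hs⟩, hs_unique⟩ := hS g g.2
    refine ⟨⟨⟨s, hSH hsS⟩, hsS⟩, hs, fun t ht => Subtype.ext (Subtype.ext ?_)⟩
    exact hs_unique t ⟨t.2, ht⟩
  rw [relIndex, ← hT.card_right, ← Nat.card_eq_finsetCard]
  exact Nat.card_congr ⟨fun s => ⟨⟨s, hSH s.2⟩, s.2⟩, fun t => ⟨t.1, t.2⟩, fun _ => rfl,
    fun _ => rfl⟩

lemma eq_of_mk_mul_mul_eq {t h₁ h₂ : G} (h₁S : h₁ ∈ S) (h₂S : h₂ ∈ S)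
    (e : Quotient.mk (QuotientGroup.rightRel H) (x * h₁ * t)
      = Quotient.mk (QuotientGroup.rightRel H) (x * h₂ * t)) : h₁ = h₂ := by
  rw [QuotientGroup.mk_rightRel_eq_iff] at e
  have hconj : x * (h₂ * h₁⁻¹) * x⁻¹ ∈ H := by
    convert e using 1
    group
  exact (hS h₂ (hSH h₂S)).unique ⟨h₁S, mul_mem (hSH h₂S) (inv_mem (hSH h₁S)), hconj⟩
    ⟨h₂S, by simp⟩

lemma exists_mk_mul_mul_eq_iff {t s : G} :
    (∃ h ∈ S, Quotient.mk (QuotientGroup.rightRel H) (x * h * t)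
      = Quotient.mk (QuotientGroup.rightRel H) s) ↔ s * t⁻¹ ∈ DoubleCoset.doubleCoset x H H := by
  simp only [QuotientGroup.mk_rightRel_eq_iff, DoubleCoset.mem_doubleCoset]
  constructor
  · rintro ⟨h, hhS, he⟩
    exact ⟨s * (x * h * t)⁻¹, he, h, hSH hhS, by group⟩
  · rintro ⟨a, ha, b, hb, e⟩
    obtain ⟨h, ⟨hhS, -, hbh⟩, -⟩ := hS b hb
    refine ⟨h, hhS, ?_⟩
    rw [mul_inv_eq_iff_eq_mul.mp e]
    convert mul_mem ha hbh using 1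
    group

lemma sum_ite_mk_mul_mul_eq {M : Type*} [AddCommMonoid M] (c : M) (t s : G) :
    ∑ h ∈ S, (if Quotient.mk (QuotientGroup.rightRel H) (x * h * t)
      = Quotient.mk (QuotientGroup.rightRel H) s then c else 0)
      = if s * t⁻¹ ∈ DoubleCoset.doubleCoset x H H then c else 0 := by
  split_ifs with hst
  · obtain ⟨h₀, h₀S, e₀⟩ := (exists_mk_mul_mul_eq_iff hSH hS).mpr hst
    rw [Finset.sum_eq_single_of_mem h₀ h₀S fun h hS' hne => if_neg fun e =>
      hne (eq_of_mk_mul_mul_eq hSH hS hS' h₀S (e.trans e₀.symm)), if_pos e₀]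
  · exact Finset.sum_eq_zero fun h hS' => if_neg fun e =>
      hst ((exists_mk_mul_mul_eq_iff hSH hS).mp ⟨h, hS', e⟩)

end Transversal

lemma HeckeModule.bilinear_ext {G : Type*} [Group G] {H : Subgroup G} {F M : Type*} [Field F]
    [AddCommMonoid M] [Module F M] {B B' : HeckeModule H F →ₗ[F] HeckeModule H F →ₗ[F] M}
    (h : ∀ t s, B (deltaH H F t) (deltaH H F s) = B' (deltaH H F t) (deltaH H F s)) :
    B = B' :=
  LinearMap.ext_basis Finsupp.basisSingleOne Finsupp.basisSingleOne fun i j =>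
    Quotient.inductionOn₂ i j h

section HeckeForm

variable {G : Type*} [Group G] {H : Subgroup G} {F : Type*} [Field F]
  {B : HeckeModule H F →ₗ[F] HeckeModule H F →ₗ[F] F}
  (hB : ∀ t s, B (deltaH H F t) (deltaH H F s) =
    if Quotient.mk (QuotientGroup.rightRel H) t = Quotient.mk (QuotientGroup.rightRel H) s
    then modularFunction H F s else 0)
include hB

lemma flip_eq_of_isHeckePair [CharZero F] (hH : IsHeckePair H) : B.flip = B := by
  refine HeckeModule.bilinear_ext fun t s => ?_
  rw [LinearMap.flip_apply, hB, hB]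
  by_cases hts : Quotient.mk (QuotientGroup.rightRel H) t = Quotient.mk (QuotientGroup.rightRel H) s
  · rw [if_pos hts.symm, if_pos hts, ← inv_mul_cancel_right s t,
      modularFunction_mul_of_mem_left hH (QuotientGroup.mk_rightRel_eq_iff.mp hts)]
  · rw [if_neg (Ne.symm hts), if_neg hts]

lemma apply_sigma_deltaH {y : G} {T : Module.End F (HeckeModule H F)} (hT : IsSigma H F y T)
    (t s : G) :
    B (T (deltaH H F t)) (deltaH H F s) = ((H ⊓ H.comapConj y).relIndex H : F)⁻¹ *
      if s * t⁻¹ ∈ DoubleCoset.doubleCoset y H H then modularFunction H F s else 0 := by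
  obtain ⟨S, hSH, hS, hTS⟩ := hT
  rw [hTS, map_smul, LinearMap.smul_apply, map_sum, LinearMap.sum_apply]
  simp only [hB]
  rw [sum_ite_mk_mul_mul_eq hSH hS, card_eq_relIndex_of_transversal hSH hS, smul_eq_mul]

end HeckeForm

/-- Let `(G, H)` be a Hecke pair, `R(x) = [H : H ∩ x⁻¹Hx]`, and let `B` be the
hermitian form on `F(H\G)` determined by `⟪δ_{Ht}, δ_{Hs}⟫ = Δ(s) = R(s)/R(s⁻¹)` if
`Ht = Hs` and `0` otherwise.  Then `⟪σ_x ξ, η⟫ = ⟪ξ, σ_{x⁻¹} η⟫` for all `ξ, η`. -/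
theorem stmt14 {G : Type*} [Group G] (H : Subgroup G) (F : Type*) [Field F] [CharZero F]
    (hH : IsHeckePair H)
    (B : HeckeModule H F →ₗ[F] HeckeModule H F →ₗ[F] F)
    (hB : ∀ t s : G,
      B (deltaH H F t) (deltaH H F s)
        = if Quotient.mk (QuotientGroup.rightRel H) t
              = Quotient.mk (QuotientGroup.rightRel H) s
          then ((H ⊓ H.comap (MulAut.conj s).toMonoidHom).relIndex H : F) /
               ((H ⊓ H.comap (MulAut.conj s⁻¹).toMonoidHom).relIndex H : F)
          else 0)
    (x : G) (σx σxi : Module.End F (HeckeModule H F))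
    (hx : IsSigma H F x σx) (hxi : IsSigma H F x⁻¹ σxi) :
    ∀ ξ η : HeckeModule H F, B (σx ξ) η = B ξ (σxi η) := by
  simp only [← modularFunction_eq] at hB
  suffices B.comp σx = B.compl₂ σxi from fun ξ η => LinearMap.congr_fun₂ this ξ η
  refine HeckeModule.bilinear_ext fun t s => ?_
  rw [LinearMap.comp_apply, LinearMap.compl₂_apply, apply_sigma_deltaH hB hx,
    ← LinearMap.flip_apply B, flip_eq_of_isHeckePair hB hH, apply_sigma_deltaH hB hxi,
    show t * s⁻¹ = (s * t⁻¹)⁻¹ by group, DoubleCoset.inv_mem_doubleCoset_inv]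
  split_ifs with hst
  · rw [← inv_mul_cancel_right s t, modularFunction_mul hH,
      modularFunction_of_mem_doubleCoset hH hst, modularFunction_eq]
    have hR : ((H ⊓ H.comapConj x).relIndex H : F) ≠ 0 := Nat.cast_ne_zero.mpr (hH x)
    have hR' : ((H ⊓ H.comapConj x⁻¹).relIndex H : F) ≠ 0 := Nat.cast_ne_zero.mpr (hH x⁻¹)
    field_simp
  · simp
end

section
/- Let (G,H) be a Hecke pair such that σ_x σ_{x⁻¹} σ_x = σ_x for all x ∈ G. Then H is protonormal in G, i.e., (x⁻¹Hx)H = H(x⁻¹Hx) for all x ∈ G. -/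
open scoped Pointwise Classical


/-!
Apply `σ_x σ_{x⁻¹} σ_x = σ_x` to `δ_H`. Both sides are positive multiples of sums of basis
vectors, so in characteristic zero they have the same support: for coset representatives
`s₁, s₃ ∈ S` of `(H ∩ x⁻¹Hx)\H` and `s₂ ∈ S'` of `(H ∩ xHx⁻¹)\H`, the coset of `x s₃ x⁻¹ s₂ x s₁`
is some `Hxs`. Writing elements of `H` as `(H ∩ x⁻¹Hx)`-multiples of representatives turns this
into `xHx⁻¹Hx ⊆ HxH` for every `x`, and that inclusion for `x` and `x⁻¹` gives the two
inclusions of `(x⁻¹Hx)H = H(x⁻¹Hx)`.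
-/

open DoubleCoset

theorem Finsupp.support_sum_single_one {α ι R : Type*} [DecidableEq α]
    [AddCommMonoidWithOne R] [CharZero R] (I : Finset ι) (f : ι → α) :
    (∑ i ∈ I, Finsupp.single (f i) (1 : R)).support = I.image f := by
  ext a
  simp [Finsupp.finsetSum_apply, Finsupp.single_apply, Finset.sum_boole]

section Hecke

variable {G : Type*} [Group G] {H : Subgroup G} {F : Type*} [Field F]

theorem support_sum_deltaH [CharZero F] {ι : Type*} (I : Finset ι) (g : ι → G) :
    (∑ i ∈ I, deltaH H F (g i)).support = I.image fun i => Quotient.mk _ (g i) :=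
  Finsupp.support_sum_single_one (R := F) I _

theorem apply_sum_deltaH {x : G} {S : Finset G} {T : Module.End F (HeckeModule H F)}
    (hT : ∀ t, T (deltaH H F t) = (S.card : F)⁻¹ • ∑ h ∈ S, deltaH H F (x * h * t))
    {ι : Type*} (I : Finset ι) (g : ι → G) :
    T (∑ i ∈ I, deltaH H F (g i)) =
      (S.card : F)⁻¹ • ∑ p ∈ I ×ˢ S, deltaH H F (x * p.2 * g p.1) := by
  simp_rw [map_sum, hT, ← Finset.smul_sum, Finset.sum_product]

theorem exists_mem_eq_mul_of_isSigma_rep {x : G} {S : Finset G}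
    (hS : ∀ g ∈ H, ∃! s, s ∈ S ∧ g * s⁻¹ ∈ H ∧ x * (g * s⁻¹) * x⁻¹ ∈ H) {g : G} (hg : g ∈ H) :
    ∃ d, x * d * x⁻¹ ∈ H ∧ ∃ s ∈ S, g = d * s := by
  obtain ⟨s, ⟨hs, -, hconj⟩, -⟩ := hS g hg
  exact ⟨g * s⁻¹, hconj, s, hs, by group⟩

theorem exists_mem_eq_mul_mul_of_mul_mul_eq_self [CharZero F] {x : G} {S S' : Finset G}
    {T T' : Module.End F (HeckeModule H F)}
    (hT : ∀ t, T (deltaH H F t) = (S.card : F)⁻¹ • ∑ h ∈ S, deltaH H F (x * h * t))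
    (hT' : ∀ t, T' (deltaH H F t) = (S'.card : F)⁻¹ • ∑ h ∈ S', deltaH H F (x⁻¹ * h * t))
    (hS : S.Nonempty) (hS' : S'.Nonempty) (hTT : T * T' * T = T)
    {s₁ s₂ s₃ : G} (hs₁ : s₁ ∈ S) (hs₂ : s₂ ∈ S') (hs₃ : s₃ ∈ S) :
    ∃ s ∈ S, ∃ a ∈ H, x * s₃ * x⁻¹ * s₂ * x * s₁ = a * x * s := by
  have hc : (S.card : F)⁻¹ ≠ 0 := by simpa using hS.card_ne_zero
  have hc' : (S'.card : F)⁻¹ ≠ 0 := by simpa using hS'.card_ne_zero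
  have hsupp := congrArg (fun v => (v (deltaH H F 1)).support) hTT
  simp only [Module.End.mul_apply, hT, map_smul, apply_sum_deltaH hT', apply_sum_deltaH hT,
    Finsupp.support_smul_eq hc, Finsupp.support_smul_eq hc', support_sum_deltaH] at hsupp
  have hmem := hsupp ▸ Finset.mem_image_of_mem _
    (Finset.mk_mem_product (Finset.mk_mem_product hs₁ hs₂) hs₃)
  obtain ⟨s, hs, hcoset⟩ : ∃ s ∈ S, Quotient.mk (QuotientGroup.rightRel H) (x * s * 1) =
      Quotient.mk _ (x * s₃ * (x⁻¹ * s₂ * (x * s₁ * 1))) := by simpa using hmem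
  rw [Quotient.eq, QuotientGroup.rightRel_apply] at hcoset
  exact ⟨s, hs, _, hcoset, by group⟩

theorem mem_doubleCoset_of_isSigma [CharZero F] {x : G} {T T' : Module.End F (HeckeModule H F)}
    (hT : IsSigma H F x T) (hT' : IsSigma H F x⁻¹ T') (hTT : T * T' * T = T)
    {h₁ h₂ : G} (hh₁ : h₁ ∈ H) (hh₂ : h₂ ∈ H) :
    x * h₁ * x⁻¹ * h₂ * x ∈ doubleCoset x H H := by
  obtain ⟨S, hSH, hSrep, hSeval⟩ := hT
  obtain ⟨S', -, hS'rep, hS'eval⟩ := hT'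
  obtain ⟨s₀, hs₀⟩ : S.Nonempty := (hSrep 1 H.one_mem).exists.imp fun _ h => h.1
  have hS' : S'.Nonempty := (hS'rep 1 H.one_mem).exists.imp fun _ h => h.1
  obtain ⟨d₂, hd₂, s₂, hs₂, rfl⟩ := exists_mem_eq_mul_of_isSigma_rep hS'rep hh₂
  rw [inv_inv] at hd₂
  obtain ⟨d₁, hd₁, s₁, hs₁, he₁⟩ := exists_mem_eq_mul_of_isSigma_rep hSrep (H.mul_mem hh₁ hd₂)
  obtain ⟨s, hs, a, ha, he⟩ := exists_mem_eq_mul_mul_of_mul_mul_eq_self hSeval hS'eval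
    ⟨s₀, hs₀⟩ hS' hTT hs₀ hs₂ hs₁
  refine mem_doubleCoset.2 ⟨x * d₁ * x⁻¹ * a, H.mul_mem hd₁ ha, s * s₀⁻¹,
    H.mul_mem (hSH hs) (H.inv_mem (hSH hs₀)), ?_⟩
  calc x * h₁ * x⁻¹ * (d₂ * s₂) * x = x * (h₁ * (x⁻¹ * d₂ * x)) * x⁻¹ * s₂ * x := by group
    _ = x * d₁ * x⁻¹ * (x * s₁ * x⁻¹ * s₂ * x * s₀) * s₀⁻¹ := by rw [he₁]; group
    _ = x * d₁ * x⁻¹ * a * x * (s * s₀⁻¹) := by rw [he]; group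

end Hecke

theorem image_conj_mul_eq_mul_image_conj {G : Type*} [Group G] {H : Subgroup G}
    (hH : ∀ x : G, ∀ h₁ ∈ H, ∀ h₂ ∈ H, x * h₁ * x⁻¹ * h₂ * x ∈ doubleCoset x H H) (x : G) :
    ((fun g => x⁻¹ * g * x) '' (H : Set G)) * (H : Set G)
      = (H : Set G) * ((fun g => x⁻¹ * g * x) '' (H : Set G)) := by
  ext g
  simp only [Set.mem_mul, Set.mem_image, SetLike.mem_coe]
  constructor
  · rintro ⟨-, ⟨h, hh, rfl⟩, k, hk, rfl⟩
    obtain ⟨a, ha, b, hb, hab⟩ := mem_doubleCoset.1 (hH x⁻¹ h hh k hk)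
    refine ⟨a, ha, x⁻¹ * b * x, ⟨b, hb, rfl⟩, ?_⟩
    calc a * (x⁻¹ * b * x) = a * x⁻¹ * b * x := by group
      _ = x⁻¹ * h * x * k := by rw [← hab]; group
  · rintro ⟨k, hk, -, ⟨h, hh, rfl⟩, rfl⟩
    obtain ⟨a, ha, b, hb, hab⟩ := mem_doubleCoset.1 (hH x k hk h hh)
    refine ⟨x⁻¹ * a * x, ⟨a, ha, rfl⟩, b, hb, ?_⟩
    calc x⁻¹ * a * x * b = x⁻¹ * (a * x * b) := by group
      _ = k * (x⁻¹ * h * x) := by rw [← hab]; group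

theorem stmt16_general {G : Type*} [Group G] (H : Subgroup G) (F : Type*) [Field F] [CharZero F]
    (σ : G → Module.End F (HeckeModule H F))
    (hσ : ∀ x : G, IsSigma H F x (σ x))
    (hpi : ∀ x : G, σ x * σ x⁻¹ * σ x = σ x) :
    ∀ x : G,
      ((fun g => x⁻¹ * g * x) '' (H : Set G)) * (H : Set G)
        = (H : Set G) * ((fun g => x⁻¹ * g * x) '' (H : Set G)) :=
  image_conj_mul_eq_mul_image_conj fun x _ hh₁ _ hh₂ =>
    mem_doubleCoset_of_isSigma (hσ x) (hσ x⁻¹) (hpi x) hh₁ hh₂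

/-- If `(G, H)` is a Hecke pair such that `σ_x σ_{x⁻¹} σ_x = σ_x` for all `x ∈ G`,
then `H` is protonormal in `G`: `(x⁻¹Hx)H = H(x⁻¹Hx)` for all `x ∈ G`. -/
theorem stmt16 {G : Type*} [Group G] (H : Subgroup G) (F : Type*) [Field F] [CharZero F]
    (hH : IsHeckePair H)
    (σ : G → Module.End F (HeckeModule H F))
    (hσ : ∀ x : G, IsSigma H F x (σ x))
    (hpi : ∀ x : G, σ x * σ x⁻¹ * σ x = σ x) :
    ∀ x : G,
      ((fun g => x⁻¹ * g * x) '' (H : Set G)) * (H : Set G)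
        = (H : Set G) * ((fun g => x⁻¹ * g * x) '' (H : Set G)) :=
  stmt16_general H F σ hσ hpi
end

section
/- Let G be the group of rational matrices [[1, b],[0, a]] with a ∈ Q*, b ∈ Q, and for a set P of primes let H_P be the subgroup of matrices [[1, η],[0, ξ]] with η ∈ A_P and ξ ∈ A_P*, where A_P is the ring of rationals with denominator not divisible by any prime in P. Then (G, H_P) is a Hecke pair: for every x ∈ G, [H_P : H_P ∩ x⁻¹H_P x] is finite. -/
/-!
Write `x = [[1, b], [0, a]]`. Conjugation by `x` sends `[[1, η], [0, ξ]]` to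
`[[1, (η + b (ξ - 1)) / a], [0, ξ]]`, so `H_P ∩ x⁻¹ H_P x` contains every element of `H_P` with
`η ≡ 0` and `ξ ≡ 1` modulo `N A_P`, as soon as `N / a` and `N b / a` lie in `A_P`. Such an `N`
can be chosen with all its prime factors in `P`; then the denominators of `A_P` are units modulo
`N`, and two elements of `H_P` whose entries `η`, `ξ` have the same residues in `ZMod N` lie in
the same coset of `H_P ∩ x⁻¹ H_P x`. Hence the index is at most `N²`.
-/

open scoped Pointwise
open Matrix

/-- `A_P`: the rationals whose denominator is divisible by no prime in `P`. -/
def ringAP (P : Set ℕ) : Set ℚ := {q : ℚ | ∀ p ∈ P, ¬ p ∣ q.den}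

section RingAP

variable {P : Set ℕ}

def subringAP (hP : ∀ p ∈ P, p.Prime) : Subring ℚ where
  carrier := ringAP P
  zero_mem' p hp := (hP p hp).not_dvd_one
  one_mem' p hp := (hP p hp).not_dvd_one
  add_mem' {q r} hq hr p hp h := by
    rcases (hP p hp).dvd_mul.mp (h.trans (Rat.add_den_dvd q r)) with h | h
    exacts [hq p hp h, hr p hp h]
  mul_mem' {q r} hq hr p hp h := by
    rcases (hP p hp).dvd_mul.mp (h.trans (Rat.mul_den_dvd q r)) with h | h
    exacts [hq p hp h, hr p hp h]
  neg_mem' {q} hq p hp := by rw [Rat.neg_den]; exact hq p hp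

theorem intCast_div_natCast_mem_ringAP (z : ℤ) {n : ℕ} (hn : ∀ p ∈ P, ¬ p ∣ n) :
    (z / n : ℚ) ∈ ringAP P := fun p hp h => by
  have hdvd : ((z / n : ℚ).den : ℤ) ∣ n := by
    simpa only [Rat.divInt_eq_div, Int.cast_natCast] using Rat.den_dvd z n
  exact hn p hp (Int.natCast_dvd_natCast.mp ((Int.natCast_dvd_natCast.mpr h).trans hdvd))

theorem Nat.exists_mul_eq_forall_dvd_mem_and_forall_mem_not_dvd (P : Set ℕ) {d : ℕ}
    (hd : d ≠ 0) :
    ∃ a b, a * b = d ∧ (∀ p, p.Prime → p ∣ a → p ∈ P) ∧ ∀ p ∈ P, p.Prime → ¬ p ∣ b := by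
  induction d using Nat.recOnMul with
  | zero => exact absurd rfl hd
  | one => exact ⟨1, 1, rfl, fun p hp h => absurd h hp.not_dvd_one, fun p _ hp => hp.not_dvd_one⟩
  | prime q hq =>
    by_cases hqP : q ∈ P
    · refine ⟨q, 1, mul_one q, fun p hp h => ?_, fun p _ hp => hp.not_dvd_one⟩
      rwa [(Nat.prime_dvd_prime_iff_eq hp hq).mp h]
    · refine ⟨1, q, one_mul q, fun p hp h => absurd h hp.not_dvd_one, fun p hpP hp h => ?_⟩
      exact hqP ((Nat.prime_dvd_prime_iff_eq hp hq).mp h ▸ hpP)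
  | mul m n ihm ihn =>
    obtain ⟨a, b, rfl, ha, hb⟩ := ihm (left_ne_zero_of_mul hd)
    obtain ⟨a', b', rfl, ha', hb'⟩ := ihn (right_ne_zero_of_mul hd)
    refine ⟨a * a', b * b', by ring, fun p hp h => ?_, fun p hpP hp h => ?_⟩
    · exact (hp.dvd_mul.mp h).elim (ha p hp) (ha' p hp)
    · exact (hp.dvd_mul.mp h).elim (hb p hpP hp) (hb' p hpP hp)

theorem exists_natCast_mul_mem_ringAP (hP : ∀ p ∈ P, p.Prime) (q : ℚ) :
    ∃ N : ℕ, N ≠ 0 ∧ (∀ p, p.Prime → p ∣ N → p ∈ P) ∧ (N * q : ℚ) ∈ ringAP P := by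
  obtain ⟨N, N', hNN', hN, hN'⟩ :=
    Nat.exists_mul_eq_forall_dvd_mem_and_forall_mem_not_dvd P q.den_ne_zero
  have hN'0 : (N' : ℚ) ≠ 0 :=
    Nat.cast_ne_zero.mpr (right_ne_zero_of_mul (hNN'.symm ▸ q.den_ne_zero))
  have hden : (q.den : ℚ) = N * N' := by exact_mod_cast hNN'.symm
  refine ⟨N, left_ne_zero_of_mul (hNN'.symm ▸ q.den_ne_zero), hN, ?_⟩
  have : (N * q : ℚ) = q.num / N' := by
    rw [eq_div_iff hN'0, ← Rat.mul_den_eq_num, hden]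
    ring
  exact this ▸ intCast_div_natCast_mem_ringAP q.num fun p hp => hN' p hp (hP p hp)

theorem exists_natCast_mul_mem_ringAP_pair (hP : ∀ p ∈ P, p.Prime) (q r : ℚ) :
    ∃ N : ℕ, N ≠ 0 ∧ (∀ p, p.Prime → p ∣ N → p ∈ P) ∧
      (N * q : ℚ) ∈ ringAP P ∧ (N * r : ℚ) ∈ ringAP P := by
  obtain ⟨M, hM0, hM, hMq⟩ := exists_natCast_mul_mem_ringAP hP q
  obtain ⟨M', hM'0, hM', hM'r⟩ := exists_natCast_mul_mem_ringAP hP r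
  refine ⟨M * M', mul_ne_zero hM0 hM'0,
    fun p hp h => (hp.dvd_mul.mp h).elim (hM p hp) (hM' p hp), ?_, ?_⟩
  · rw [Nat.cast_mul, mul_comm (M : ℚ), mul_assoc]
    exact (subringAP hP).mul_mem (natCast_mem _ M') hMq
  · rw [Nat.cast_mul, mul_assoc]
    exact (subringAP hP).mul_mem (natCast_mem _ M) hM'r

/-- The residue of `q` modulo `N`; junk unless `q.den` is coprime to `N`. -/
noncomputable def Rat.reduceMod (N : ℕ) (q : ℚ) : ZMod N := q.num * (q.den : ZMod N)⁻¹

theorem isUnit_den_of_mem_ringAP {N : ℕ} (hN : ∀ p, p.Prime → p ∣ N → p ∈ P) {q : ℚ}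
    (hq : q ∈ ringAP P) : IsUnit (q.den : ZMod N) :=
  (ZMod.isUnit_iff_coprime _ _).mpr
    (Nat.coprime_of_dvd fun p hp hpq hpN => hq p (hN p hp hpN) hpq)

theorem sub_div_mem_ringAP_of_reduceMod_eq (hP : ∀ p ∈ P, p.Prime) {N : ℕ}
    (hN : ∀ p, p.Prime → p ∣ N → p ∈ P) {q r : ℚ} (hq : q ∈ ringAP P) (hr : r ∈ ringAP P)
    (h : q.reduceMod N = r.reduceMod N) : ((r - q) / N : ℚ) ∈ ringAP P := by
  have hcross : ((r.num * q.den - q.num * r.den : ℤ) : ZMod N) = 0 := by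
    have hq' := ZMod.mul_inv_of_unit _ (isUnit_den_of_mem_ringAP hN hq)
    have hr' := ZMod.mul_inv_of_unit _ (isUnit_den_of_mem_ringAP hN hr)
    unfold Rat.reduceMod at h
    push_cast
    linear_combination (-(q.den * r.den : ZMod N)) * h + q.num * r.den * hq' - r.num * q.den * hr'
  obtain ⟨c, hc⟩ := (ZMod.intCast_zmod_eq_zero_iff_dvd _ _).mp hcross
  rcases eq_or_ne N 0 with rfl | hN0
  · rw [Nat.cast_zero, div_zero]; exact (subringAP hP).zero_mem
  have hc' : (r.num * q.den - q.num * r.den : ℚ) = N * c := by exact_mod_cast hc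
  have : ((r - q) / N : ℚ) = c / (q.den * r.den : ℕ) := by
    rw [div_eq_div_iff (by exact_mod_cast hN0) (by positivity)]
    push_cast
    linear_combination q.den * r.mul_den_eq_num - r.den * q.mul_den_eq_num + hc'
  refine this ▸ intCast_div_natCast_mem_ringAP c fun p hp h => ?_
  exact ((hP p hp).dvd_mul.mp h).elim (hq p hp) (hr p hp)

end RingAP

theorem Subgroup.relIndex_ne_zero_of_inv_mul_mem_of_eq {G S : Type*} [Group G] [Finite S]
    {H K : Subgroup G} (f : G → S) (hf : ∀ g₁ ∈ H, ∀ g₂ ∈ H, f g₁ = f g₂ → g₁⁻¹ * g₂ ∈ K) :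
    K.relIndex H ≠ 0 := by
  let fH : H → S := fun h => f h
  have : Finite (H ⧸ K.subgroupOf H) := by
    refine Finite.of_surjective
      (fun s => (QuotientGroup.mk (Function.invFun fH s) : H ⧸ K.subgroupOf H)) ?_
    rintro ⟨h⟩
    refine ⟨fH h, QuotientGroup.eq.mpr (Subgroup.mem_subgroupOf.mpr ?_)⟩
    exact hf _ (Function.invFun fH (fH h)).2 _ h.2 (Function.invFun_eq (f := fH) ⟨h, rfl⟩)
  exact Subgroup.index_ne_zero_of_finite

theorem Matrix.GeneralLinearGroup.mul_apply_fin_two {R : Type*} [CommRing R]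
    (A B : GL (Fin 2) R) (i j : Fin 2) :
    (A * B).1 i j = A.1 i 0 * B.1 0 j + A.1 i 1 * B.1 1 j := by
  rw [Units.val_mul, Matrix.mul_apply, Fin.sum_univ_two]

open Matrix.GeneralLinearGroup

section AffineGroup

variable (K : Type*) [Field K]

def affineGroup : Subgroup (GL (Fin 2) K) where
  carrier := {M | M.1 0 0 = 1 ∧ M.1 1 0 = 0}
  one_mem' := by simp
  mul_mem' {A B} hA hB := by simp [mul_apply_fin_two, hA.1, hA.2, hB.1, hB.2]
  inv_mem' {A} hA := by
    have h00 : (A⁻¹ * A).1 0 0 = (1 : GL (Fin 2) K).1 0 0 := by rw [inv_mul_cancel]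
    have h10 : (A⁻¹ * A).1 1 0 = (1 : GL (Fin 2) K).1 1 0 := by rw [inv_mul_cancel]
    rw [mul_apply_fin_two, hA.1, hA.2] at h00 h10
    simp_all

namespace affineGroup

variable {K} {A : GL (Fin 2) K} (hA : A ∈ affineGroup K)
include hA

theorem mul_apply_zero_one (B : GL (Fin 2) K) :
    (A * B).1 0 1 = B.1 0 1 + A.1 0 1 * B.1 1 1 := by
  rw [mul_apply_fin_two, hA.1, one_mul]

theorem mul_apply_one_one (B : GL (Fin 2) K) : (A * B).1 1 1 = A.1 1 1 * B.1 1 1 := by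
  rw [mul_apply_fin_two, hA.2, zero_mul, zero_add]

theorem apply_one_one_ne_zero : A.1 1 1 ≠ 0 := by
  have hdet := (Matrix.isUnit_iff_isUnit_det A.1).mp A.isUnit
  rwa [Matrix.det_fin_two, hA.1, hA.2, one_mul, mul_zero, sub_zero, isUnit_iff_ne_zero] at hdet

theorem inv_apply_one_one : (A⁻¹).1 1 1 = (A.1 1 1)⁻¹ := by
  have h : (A * A⁻¹).1 1 1 = (1 : GL (Fin 2) K).1 1 1 := by rw [mul_inv_cancel]
  rw [mul_apply_one_one hA] at h
  simp only [Units.val_one, Matrix.one_apply_eq] at h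
  exact eq_inv_of_mul_eq_one_right h

theorem inv_apply_zero_one : (A⁻¹).1 0 1 = -A.1 0 1 / A.1 1 1 := by
  have h : (A * A⁻¹).1 0 1 = (1 : GL (Fin 2) K).1 0 1 := by rw [mul_inv_cancel]
  rw [mul_apply_zero_one hA, inv_apply_one_one hA] at h
  simp only [Units.val_one, Matrix.one_apply_ne zero_ne_one] at h
  linear_combination h

variable {x : GL (Fin 2) K} (hx : x ∈ affineGroup K)
include hx

theorem conj_apply_zero_one :
    (x * A * x⁻¹).1 0 1 = (A.1 0 1 + x.1 0 1 * (A.1 1 1 - 1)) / x.1 1 1 := by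
  rw [mul_apply_zero_one (mul_mem hx hA), mul_apply_zero_one hx, inv_apply_zero_one hx,
    inv_apply_one_one hx]
  ring

theorem conj_apply_one_one : (x * A * x⁻¹).1 1 1 = A.1 1 1 := by
  rw [mul_apply_one_one (mul_mem hx hA), mul_apply_one_one hx, inv_apply_one_one hx,
    mul_comm (x.1 1 1), mul_inv_cancel_right₀ (apply_one_one_ne_zero hx)]

end affineGroup

end AffineGroup

section AffineGroupAP

open affineGroup

variable {P : Set ℕ} (hP : ∀ p ∈ P, p.Prime)

def affineGroupAP : Subgroup (GL (Fin 2) ℚ) where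
  carrier := {M | M ∈ affineGroup ℚ ∧ M.1 0 1 ∈ ringAP P ∧ M.1 1 1 ≠ 0 ∧ M.1 1 1 ∈ ringAP P ∧
    (M.1 1 1)⁻¹ ∈ ringAP P}
  one_mem' := by
    refine ⟨one_mem _, ?_, ?_, ?_, ?_⟩ <;> simp only [Units.val_one, Matrix.one_apply_eq,
      Matrix.one_apply_ne zero_ne_one, inv_one]
    exacts [(subringAP hP).zero_mem, one_ne_zero, (subringAP hP).one_mem, (subringAP hP).one_mem]
  mul_mem' {A B} := by
    rintro ⟨hA, hA01, hA11, hA11m, hA11i⟩ ⟨hB, hB01, hB11, hB11m, hB11i⟩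
    refine ⟨mul_mem hA hB, ?_, ?_, ?_, ?_⟩ <;>
      simp only [mul_apply_zero_one hA, mul_apply_one_one hA, mul_inv]
    exacts [(subringAP hP).add_mem hB01 ((subringAP hP).mul_mem hA01 hB11m),
      mul_ne_zero hA11 hB11, (subringAP hP).mul_mem hA11m hB11m,
      (subringAP hP).mul_mem hA11i hB11i]
  inv_mem' {A} := by
    rintro ⟨hA, hA01, hA11, hA11m, hA11i⟩
    refine ⟨inv_mem hA, ?_, ?_, ?_, ?_⟩ <;>
      simp only [inv_apply_zero_one hA, inv_apply_one_one hA, inv_inv, neg_mul, div_eq_mul_inv]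
    exacts [(subringAP hP).neg_mem ((subringAP hP).mul_mem hA01 hA11i), inv_ne_zero hA11, hA11i,
      hA11m]

theorem conj_mem_affineGroupAP {x h : GL (Fin 2) ℚ} (hx : x ∈ affineGroup ℚ)
    (hh : h ∈ affineGroupAP hP)
    (h01 : (h.1 0 1 + x.1 0 1 * (h.1 1 1 - 1)) / x.1 1 1 ∈ ringAP P) :
    x * h * x⁻¹ ∈ affineGroupAP hP := by
  obtain ⟨hhG, -, hh11⟩ := hh
  refine ⟨mul_mem (mul_mem hx hhG) (inv_mem hx), ?_⟩
  rw [conj_apply_zero_one hhG hx, conj_apply_one_one hhG hx]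
  exact ⟨h01, hh11⟩

theorem inv_mul_mem_comap_conj_of_reduceMod_eq {x : GL (Fin 2) ℚ} (hx : x ∈ affineGroup ℚ)
    {N : ℕ} (hN0 : N ≠ 0) (hN : ∀ p, p.Prime → p ∣ N → p ∈ P)
    (hNa : (N * (x.1 1 1)⁻¹ : ℚ) ∈ ringAP P) (hNb : (N * (x.1 0 1 / x.1 1 1) : ℚ) ∈ ringAP P)
    {h₁ h₂ : GL (Fin 2) ℚ} (hh₁ : h₁ ∈ affineGroupAP hP) (hh₂ : h₂ ∈ affineGroupAP hP)
    (h01 : (h₁.1 0 1).reduceMod N = (h₂.1 0 1).reduceMod N)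
    (h11 : (h₁.1 1 1).reduceMod N = (h₂.1 1 1).reduceMod N) :
    h₁⁻¹ * h₂ ∈ (affineGroupAP hP).comap (MulAut.conj x).toMonoidHom := by
  refine conj_mem_affineGroupAP hP hx (mul_mem (inv_mem hh₁) hh₂) ?_
  obtain ⟨hh₁G, hη₁, hξ₁0, hξ₁, hξ₁inv⟩ := hh₁
  obtain ⟨-, hη₂, -, hξ₂, -⟩ := hh₂
  set g := h₁⁻¹ * h₂
  have hη : h₂.1 0 1 = g.1 0 1 + h₁.1 0 1 * g.1 1 1 := by
    rw [← mul_apply_zero_one hh₁G, mul_inv_cancel_left]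
  have hξ : h₂.1 1 1 = h₁.1 1 1 * g.1 1 1 := by
    rw [← mul_apply_one_one hh₁G, mul_inv_cancel_left]
  have key : (g.1 0 1 + x.1 0 1 * (g.1 1 1 - 1)) / x.1 1 1 =
      (h₂.1 0 1 - h₁.1 0 1) / N * (N * (x.1 1 1)⁻¹) + (h₂.1 1 1 - h₁.1 1 1) / N *
        (h₁.1 1 1)⁻¹ * (N * (x.1 0 1 / x.1 1 1) - h₁.1 0 1 * (N * (x.1 1 1)⁻¹)) := by
    rw [hη, hξ]
    field_simp
    ring
  let A := subringAP hP
  rw [key]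
  exact A.add_mem (A.mul_mem (sub_div_mem_ringAP_of_reduceMod_eq hP hN hη₁ hη₂ h01) hNa)
    (A.mul_mem (A.mul_mem (sub_div_mem_ringAP_of_reduceMod_eq hP hN hξ₁ hξ₂ h11) hξ₁inv)
      (A.sub_mem hNb (A.mul_mem hη₁ hNa)))

end AffineGroupAP

/-- Let `G` be the group of rational matrices `[[1, b], [0, a]]` (`a ∈ ℚ*`, `b ∈ ℚ`)
and, for a set `P` of primes, let `H_P ≤ G` consist of the matrices `[[1, η], [0, ξ]]`
with `η ∈ A_P` and `ξ ∈ A_P*`.  Then `(G, H_P)` is a Hecke pair: for every `x ∈ G`,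
the index `[H_P : H_P ∩ x⁻¹ H_P x]` is finite. -/
theorem stmt18 (P : Set ℕ) (hP : ∀ p ∈ P, p.Prime) :
    ∃ G' HP : Subgroup (GL (Fin 2) ℚ),
      (∀ M : GL (Fin 2) ℚ, M ∈ G' ↔
        (M : Matrix (Fin 2) (Fin 2) ℚ) 0 0 = 1 ∧
        (M : Matrix (Fin 2) (Fin 2) ℚ) 1 0 = 0) ∧
      (∀ M : GL (Fin 2) ℚ, M ∈ HP ↔
        M ∈ G' ∧ (M : Matrix (Fin 2) (Fin 2) ℚ) 0 1 ∈ ringAP P ∧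
          (M : Matrix (Fin 2) (Fin 2) ℚ) 1 1 ≠ 0 ∧
          (M : Matrix (Fin 2) (Fin 2) ℚ) 1 1 ∈ ringAP P ∧
          ((M : Matrix (Fin 2) (Fin 2) ℚ) 1 1)⁻¹ ∈ ringAP P) ∧
      ∀ x ∈ G', (HP ⊓ HP.comap (MulAut.conj x).toMonoidHom).relIndex HP ≠ 0 := by
  refine ⟨affineGroup ℚ, affineGroupAP hP, fun _ => Iff.rfl, fun _ => Iff.rfl, fun x hx => ?_⟩
  obtain ⟨N, hN0, hN, hNa, hNb⟩ :=
    exists_natCast_mul_mem_ringAP_pair hP (x.1 1 1)⁻¹ (x.1 0 1 / x.1 1 1)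
  have : NeZero N := ⟨hN0⟩
  refine Subgroup.relIndex_ne_zero_of_inv_mul_mem_of_eq
    (fun g : GL (Fin 2) ℚ => ((g.1 0 1).reduceMod N, (g.1 1 1).reduceMod N)) ?_
  intro h₁ hh₁ h₂ hh₂ heq
  obtain ⟨h01, h11⟩ := Prod.ext_iff.mp heq
  exact Subgroup.mem_inf.mpr ⟨mul_mem (inv_mem hh₁) hh₂,
    inv_mul_mem_comap_conj_of_reduceMod_eq hP hx hN0 hN hNa hNb hh₁ hh₂ h01 h11⟩
end
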